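/- Let S be a string over a nonempty finite alphabet Σ, let w be a σ-word of S, and let a, b ∈ Σ be characters such that occ_S(w ++ [c]) < |Σ| for every character c ∉ {a, b}. If x is a word having w as a proper prefix such that neither w ++ [a] nor w ++ [b] is a prefix of x, then occ_S(x) < |Σ|; in particular x is not a σ-word (and hence not a branching-σ-word) of S. -/
import Mathlib


/-- `occ S w`: the number of indices `i` with `0 ≤ i < |S|` such that `w` is a prefix
of the suffix of `S` starting at position `i`. -/
def occ {α : Type*} [DecidableEq α] (S w : List α) : ℕ :=
  ((Finset.range S.length).filter (fun i => w <+: S.drop i)).card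

/-- `w` is a σ-word of `S` if `occ S w ≥ |Σ|`. -/
def SigmaWord {α : Type*} [DecidableEq α] [Fintype α] (S w : List α) : Prop :=
  Fintype.card α ≤ occ S w

/-- `w` is a branching-σ-word of `S` if two distinct one-character extensions of `w`
are σ-words of `S`. -/
def BranchingSigmaWord {α : Type*} [DecidableEq α] [Fintype α] (S w : List α) : Prop :=
  ∃ a b : α, a ≠ b ∧ SigmaWord S (w ++ [a]) ∧ SigmaWord S (w ++ [b])

/-- `w` is a σ-leaf-word of `S` if it is a σ-word of `S` but no one-character
extension of `w` is a σ-word of `S`. -/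
def SigmaLeafWord {α : Type*} [DecidableEq α] [Fintype α] (S w : List α) : Prop :=
  SigmaWord S w ∧ ∀ a : α, ¬ SigmaWord S (w ++ [a])


lemma occ_mono {α : Type*} [DecidableEq α] {S u v : List α} (h : u <+: v) :
    occ S v ≤ occ S u := by
  apply Finset.card_le_card
  intro i hi
  simp only [Finset.mem_filter] at *
  exact ⟨hi.1, h.trans hi.2⟩

theorem stmt_15 {α : Type*} [DecidableEq α] [Fintype α] [Nonempty α] (S : List α)
    (w : List α) (hw : SigmaWord S w) (a b : α)
    (hsmall : ∀ c : α, c ≠ a → c ≠ b → occ S (w ++ [c]) < Fintype.card α)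
    (x : List α) (hpre : w <+: x) (hproper : w ≠ x)
    (hna : ¬ (w ++ [a]) <+: x) (hnb : ¬ (w ++ [b]) <+: x) :
    occ S x < Fintype.card α ∧ ¬ SigmaWord S x ∧ ¬ BranchingSigmaWord S x := by
  obtain ⟨t, rfl⟩ := hpre
  cases t with
  | nil => simp at hproper
  | cons c t' =>
    have hc : w ++ [c] <+: w ++ c :: t' := by
      refine ⟨t', by simp⟩
    have hca : c ≠ a := fun h => hna (h ▸ hc)
    have hcb : c ≠ b := fun h => hnb (h ▸ hc)
    have hkey : occ S (w ++ c :: t') < Fintype.card α :=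
      lt_of_le_of_lt (occ_mono hc) (hsmall c hca hcb)
    refine ⟨hkey, fun h => absurd h (not_le.2 hkey), ?_⟩
    rintro ⟨a', b', -, ha', -⟩
    exact absurd ha' (not_le.2 (lt_of_le_of_lt (occ_mono ⟨[a'], by simp⟩) hkey))
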